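/- arXiv:2601.13036 — 6 statements merged into one kernel-verified Lean document; each statement's English description precedes it below -/
import Mathlib

section
/- Let 𝔤 be a real Lie algebra equipped with a symmetric invariant ℝ-bilinear form B (i.e. B(⁅z,x⁆, y) + B(x, ⁅z,y⁆) = 0 for all x, y, z ∈ 𝔤), and let σ : 𝔤 → 𝔤 be a Lie algebra automorphism with σ ∘ σ = id; set 𝔩 = {x : σ(x) = x} and 𝔪 = {x : σ(x) = −x}. Assume: (i) the restriction of B to 𝔪 is nondegenerate; (ii) the action of 𝔩 on 𝔪 is faithful, i.e. if a ∈ 𝔩 satisfies ⁅a, x⁆ = 0 for all x ∈ 𝔪 then a = 0; (iii) I : 𝔪 → 𝔪 is an ℝ-linear map that commutes with the adjoint action of 𝔩 (I⁅a, x⁆ = ⁅a, I x⁆ for all a ∈ 𝔩, x ∈ 𝔪) and is skew-symmetric with respect to B on 𝔪 (B(I x, y) + B(x, I y) = 0 for all x, y ∈ 𝔪). Then ⁅I x, y⁆ + ⁅x, I y⁆ = 0 for all x, y ∈ 𝔪; consequently, the ℝ-linear extension of I to 𝔤 defined to be zero on 𝔩 is a derivation of 𝔤. -/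
/-- Let `𝔤` be a real Lie algebra with a symmetric invariant
bilinear form `B` and an involutive automorphism `σ`, with eigenspaces
`𝔩 = {x | σ x = x}` and `𝔪 = {x | σ x = -x}`.  Assume `B` restricted to `𝔪` is
nondegenerate, `𝔩` acts faithfully on `𝔪`, and `I` is a linear map on `𝔤`
vanishing on `𝔩`, preserving `𝔪`, commuting with the adjoint action of `𝔩` on
`𝔪`, and skew-symmetric with respect to `B` on `𝔪`.  Then
`⁅I x, y⁆ + ⁅x, I y⁆ = 0` for all `x, y ∈ 𝔪`, and consequently `I` is a
derivation of `𝔤`. -/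
theorem derivation_from_skew_equivariant_endomorphism
    (𝔤 : Type*) [LieRing 𝔤] [LieAlgebra ℝ 𝔤]
    (B : 𝔤 →ₗ[ℝ] 𝔤 →ₗ[ℝ] ℝ)
    (hBsymm : ∀ x y : 𝔤, B x y = B y x)
    (hBinv : ∀ z x y : 𝔤, B ⁅z, x⁆ y + B x ⁅z, y⁆ = 0)
    (σ : 𝔤 →ₗ⁅ℝ⁆ 𝔤) (hσ : ∀ x, σ (σ x) = x)
    (hBnd : ∀ z : 𝔤, σ z = -z → (∀ x : 𝔤, σ x = -x → B x z = 0) → z = 0)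
    (hfaithful : ∀ a : 𝔤, σ a = a → (∀ x : 𝔤, σ x = -x → ⁅a, x⁆ = 0) → a = 0)
    (I : 𝔤 →ₗ[ℝ] 𝔤)
    (hIl : ∀ x : 𝔤, σ x = x → I x = 0)
    (hIm : ∀ x : 𝔤, σ x = -x → σ (I x) = -(I x))
    (hIcomm : ∀ a x : 𝔤, σ a = a → σ x = -x → I ⁅a, x⁆ = ⁅a, I x⁆)
    (hIskew : ∀ x y : 𝔤, σ x = -x → σ y = -y → B (I x) y + B x (I y) = 0) :
    (∀ x y : 𝔤, σ x = -x → σ y = -y → ⁅I x, y⁆ + ⁅x, I y⁆ = 0) ∧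
      (∀ x y : 𝔤, I ⁅x, y⁆ = ⁅I x, y⁆ + ⁅x, I y⁆) := by
  -- ad-invariance in the other form
  have hBad : ∀ z x y : 𝔤, B ⁅z, x⁆ y = B z ⁅x, y⁆ := by
    intro z x y
    have h := hBinv x z y
    have : (⁅x, z⁆ : 𝔤) = -⁅z, x⁆ := by simp [lie_skew]
    rw [this] at h
    simp only [map_neg, LinearMap.neg_apply] at h
    linarith
  have part1 : ∀ x y : 𝔤, σ x = -x → σ y = -y → ⁅I x, y⁆ + ⁅x, I y⁆ = 0 := by
    intro x y hx hy
    set a : 𝔤 := ⁅I x, y⁆ + ⁅x, I y⁆ with ha_def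
    have ha : σ a = a := by
      simp only [ha_def, map_add, LieHom.map_lie, hx, hy, hIm x hx, hIm y hy,
        neg_lie, lie_neg, neg_neg]
    refine hfaithful a ha ?_
    intro z hz
    have hm : σ (⁅a, z⁆ : 𝔤) = -⁅a, z⁆ := by
      rw [LieHom.map_lie, ha, hz, lie_neg]
    refine hBnd _ hm ?_
    intro w hw
    rw [hBsymm]
    -- c = ⁅z, w⁆ ∈ 𝔩
    have hc : σ (⁅z, w⁆ : 𝔤) = ⁅z, w⁆ := by
      rw [LieHom.map_lie, hz, hw, neg_lie, lie_neg, neg_neg]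
    have hyc : σ (⁅y, ⁅z, w⁆⁆ : 𝔤) = -⁅y, ⁅z, w⁆⁆ := by
      rw [LieHom.map_lie, hy, hc, neg_lie]
    have hIyc : I ⁅y, ⁅z, w⁆⁆ = -⁅⁅z, w⁆, I y⁆ := by
      have : (⁅y, ⁅z, w⁆⁆ : 𝔤) = -⁅⁅z, w⁆, y⁆ := (lie_skew _ _).symm
      rw [this, map_neg, hIcomm _ _ hc hy]
    have h1 : B ⁅I x, y⁆ ⁅z, w⁆ = B x ⁅⁅z, w⁆, I y⁆ := by
      rw [hBad]
      have hs := hIskew x ⁅y, ⁅z, w⁆⁆ hx hyc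
      have : B (I x) ⁅y, ⁅z, w⁆⁆ = -B x (I ⁅y, ⁅z, w⁆⁆) := by linarith
      rw [this, hIyc]
      simp
    have h2 : B ⁅x, I y⁆ ⁅z, w⁆ = -B x ⁅⁅z, w⁆, I y⁆ := by
      rw [hBad]
      have : (⁅I y, ⁅z, w⁆⁆ : 𝔤) = -⁅⁅z, w⁆, I y⁆ := (lie_skew _ _).symm
      rw [this, map_neg]
    have : B ⁅a, z⁆ w = B a ⁅z, w⁆ := hBad a z w
    rw [this, ha_def, map_add, LinearMap.add_apply, h1, h2]
    ring
  refine ⟨part1, ?_⟩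
  -- case analysis for pure eigenvectors
  have hcase : ∀ x y : 𝔤, (σ x = x ∨ σ x = -x) → (σ y = y ∨ σ y = -y) →
      I ⁅x, y⁆ = ⁅I x, y⁆ + ⁅x, I y⁆ := by
    intro x y hx hy
    rcases hx with hx | hx <;> rcases hy with hy | hy
    · have : σ (⁅x, y⁆ : 𝔤) = ⁅x, y⁆ := by rw [LieHom.map_lie, hx, hy]
      rw [hIl _ this, hIl _ hx, hIl _ hy]; simp
    · rw [hIcomm x y hx hy, hIl _ hx]; simp
    · have : (⁅x, y⁆ : 𝔤) = -⁅y, x⁆ := by simp [lie_skew]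
      rw [this, map_neg, hIcomm y x hy hx, hIl _ hy]
      simp [lie_skew]
    · have hl : σ (⁅x, y⁆ : 𝔤) = ⁅x, y⁆ := by
        rw [LieHom.map_lie, hx, hy, neg_lie, lie_neg, neg_neg]
      rw [hIl _ hl, part1 x y hx hy]
  intro x y
  have hdec : ∀ v : 𝔤, v = (2:ℝ)⁻¹ • (v + σ v) + (2:ℝ)⁻¹ • (v - σ v) := by
    intro v
    have h2 : v + σ v + (v - σ v) = (2:ℝ) • v := by rw [two_smul]; abel
    rw [← smul_add, h2, smul_smul]
    norm_num
  have hdx := hdec x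
  have hdy := hdec y
  have hl : ∀ v : 𝔤, σ ((2:ℝ)⁻¹ • (v + σ v)) = (2:ℝ)⁻¹ • (v + σ v) := by
    intro v
    rw [map_smul, map_add, hσ, add_comm]
  have hm : ∀ v : 𝔤, σ ((2:ℝ)⁻¹ • (v - σ v)) = -((2:ℝ)⁻¹ • (v - σ v)) := by
    intro v
    rw [map_smul, map_sub, hσ, ← smul_neg, neg_sub]
  have hxl := hl x
  have hxm := hm x
  have hyl := hl y
  have hym := hm y
  conv_lhs => rw [hdx, hdy]
  conv_rhs => rw [hdx, hdy]
  simp only [add_lie, lie_add, map_add,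
    hcase _ _ (Or.inl hxl) (Or.inl hyl), hcase _ _ (Or.inl hxl) (Or.inr hym),
    hcase _ _ (Or.inr hxm) (Or.inl hyl), hcase _ _ (Or.inr hxm) (Or.inr hym)]
  abel
end

section
/- Let 𝔤 be a finite-dimensional simple real Lie algebra. Then there do not exist ℝ-linear maps I, J : 𝔤 → 𝔤 with I ∘ I = −id, J ∘ J = −id and I ∘ J = −J ∘ I such that both I and J commute with every adjoint map, i.e. I⁅x, y⁆ = ⁅x, I y⁆ and J⁅x, y⁆ = ⁅x, J y⁆ for all x, y ∈ 𝔤. In other words, the adjoint representation of a simple real Lie algebra is never of quaternionic type. -/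
/-! An equivariant endomorphism of the adjoint representation also satisfies `f ⁅x, y⁆ = ⁅f x, y⁆`,
so two of them, `f` and `g`, agree on brackets in either order:
`f (g ⁅x, y⁆) = ⁅g x, f y⁆ = g (f ⁅x, y⁆)`. A simple Lie algebra is spanned by its brackets, hence
`I` and `J` commute. Since they also anticommute, `I J = 0` (as `2` is invertible), so
`J = -I (I J) = 0` and `1 = -J J = 0`, contradicting nontriviality. -/

theorem subsingleton_of_commute_of_anticommute {R A : Type*} [Semiring R] [Ring A] [Module R A]
    [Invertible (2 : R)] {i j : A} (hi : i * i = -1) (hj : j * j = -1) (hcomm : i * j = j * i)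
    (hanti : i * j = -(j * i)) : Subsingleton A := by
  have hij : i * j = 0 := by
    have h2 : (2 : R) • (i * j) = 0 := by
      rw [two_smul]
      nth_rewrite 2 [hcomm]
      rw [hanti, neg_add_cancel]
    simpa using congrArg (⅟(2 : R) • ·) h2
  have hj0 : j = 0 :=
    calc j = -(i * i * j) := by rw [hi, neg_one_mul, neg_neg]
      _ = 0 := by rw [mul_assoc, hij, mul_zero, neg_zero]
  rw [hj0, mul_zero] at hj
  exact subsingleton_of_zero_eq_one (neg_eq_zero.mp hj.symm).symm

namespace LieAlgebra

section Equivariant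

variable {L F : Type*} [LieRing L] [FunLike F L L] [AddMonoidHomClass F L L]

theorem map_lie_eq_lie_map_left {f : F} (hf : ∀ x y : L, f ⁅x, y⁆ = ⁅x, f y⁆) (x y : L) :
    f ⁅x, y⁆ = ⁅f x, y⁆ := by
  rw [← lie_skew, map_neg, hf, ← lie_skew, neg_neg]

theorem map_map_lie_comm {f g : F} (hf : ∀ x y : L, f ⁅x, y⁆ = ⁅x, f y⁆)
    (hg : ∀ x y : L, g ⁅x, y⁆ = ⁅x, g y⁆) (x y : L) : f (g ⁅x, y⁆) = g (f ⁅x, y⁆) := by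
  rw [map_lie_eq_lie_map_left hg, hf, hf, map_lie_eq_lie_map_left hg]

end Equivariant

theorem commute_of_derivedSeries_eq_top {R L : Type*} [CommRing R] [LieRing L] [LieAlgebra R L]
    (hL : derivedSeries R L 1 = ⊤) {f g : Module.End R L} (hf : ∀ x y : L, f ⁅x, y⁆ = ⁅x, f y⁆)
    (hg : ∀ x y : L, g ⁅x, y⁆ = ⁅x, g y⁆) : Commute f g := by
  have hspan : Submodule.span R {⁅x, y⁆ | (x : L) (y : L)} = ⊤ := by
    rw [← coe_derivedSeries_one_eq, hL, LieIdeal.top_toLieSubalgebra, LieSubalgebra.top_toSubmodule]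
  refine LinearMap.ext_on hspan ?_
  rintro _ ⟨x, y, rfl⟩
  exact map_map_lie_comm hf hg x y

theorem IsSimple.derivedSeries_one_eq_top (R L : Type*) [CommRing R] [LieRing L] [LieAlgebra R L]
    [IsSimple R L] : derivedSeries R L 1 = ⊤ := by
  have h : ¬IsLieAbelian (⊤ : LieIdeal R L) := by
    rw [lie_abelian_iff_equiv_lie_abelian (LieIdeal.topEquiv (R := R) (L := L))]
    exact IsSimple.non_abelian R
  exact lie_eq_self_of_isAtom_of_nonabelian ⊤ (IsSimple.isAtom_top R L) h

end LieAlgebra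

theorem adjoint_rep_not_quaternionic_general
    (𝔤 : Type*) [LieRing 𝔤] [LieAlgebra ℝ 𝔤]
    [LieAlgebra.IsSimple ℝ 𝔤] :
    ¬ ∃ (I J : 𝔤 →ₗ[ℝ] 𝔤),
        I ∘ₗ I = -LinearMap.id ∧
        J ∘ₗ J = -LinearMap.id ∧
        I ∘ₗ J = -(J ∘ₗ I) ∧
        (∀ x y : 𝔤, I ⁅x, y⁆ = ⁅x, I y⁆) ∧
        (∀ x y : 𝔤, J ⁅x, y⁆ = ⁅x, J y⁆) := by
  rintro ⟨I, J, hI, hJ, hanti, hIeq, hJeq⟩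
  have hcomm : Commute I J := LieAlgebra.commute_of_derivedSeries_eq_top
    (LieAlgebra.IsSimple.derivedSeries_one_eq_top ℝ 𝔤) hIeq hJeq
  have := LieAlgebra.IsSimple.nontrivial ℝ (L := 𝔤)
  exact not_subsingleton (Module.End ℝ 𝔤)
    (subsingleton_of_commute_of_anticommute (R := ℝ) hI hJ hcomm.eq hanti)

/-- The adjoint representation of a finite-dimensional simple
real Lie algebra is never of quaternionic type: there are no anticommuting
equivariant complex structures `I, J` on `𝔤`. -/
theorem adjoint_rep_not_quaternionic
    (𝔤 : Type*) [LieRing 𝔤] [LieAlgebra ℝ 𝔤]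
    [FiniteDimensional ℝ 𝔤] [LieAlgebra.IsSimple ℝ 𝔤] :
    ¬ ∃ (I J : 𝔤 →ₗ[ℝ] 𝔤),
        I ∘ₗ I = -LinearMap.id ∧
        J ∘ₗ J = -LinearMap.id ∧
        I ∘ₗ J = -(J ∘ₗ I) ∧
        (∀ x y : 𝔤, I ⁅x, y⁆ = ⁅x, I y⁆) ∧
        (∀ x y : 𝔤, J ⁅x, y⁆ = ⁅x, J y⁆) :=
  adjoint_rep_not_quaternionic_general 𝔤
end

section
/- Let V be an ℝ-linear subspace of the space of pure imaginary quaternions that is closed under the commutator bracket, i.e. p, q ∈ V implies p*q − q*p ∈ V. Then V does not have dimension 2. Equivalently, the real Lie algebra sp(1) of pure imaginary quaternions (with the commutator bracket) has no 2-dimensional Lie subalgebra. -/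
open Quaternion

lemma sq3_aux {x y z : ℝ} (h : x^2 + y^2 + z^2 = 0) : x = 0 ∧ y = 0 ∧ z = 0 := by
  refine ⟨?_, ?_, ?_⟩ <;>
  · rw [← pow_eq_zero_iff (n := 2) two_ne_zero]
    nlinarith [sq_nonneg x, sq_nonneg y, sq_nonneg z]


/-- The real Lie algebra `sp(1)` of pure imaginary quaternions
(with the commutator bracket) has no 2-dimensional Lie subalgebra: a real
subspace of the pure imaginary quaternions closed under commutators cannot
have dimension 2. -/
theorem sp1_no_two_dimensional_subalgebra
    (V : Submodule ℝ ℍ[ℝ])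
    (hpure : ∀ v ∈ V, v.re = 0)
    (hbr : ∀ p ∈ V, ∀ q ∈ V, p * q - q * p ∈ V) :
    Module.finrank ℝ ↥V ≠ 2 := by
  intro h2
  have hfd : FiniteDimensional ℝ ↥V := FiniteDimensional.of_finrank_eq_succ h2
  obtain ⟨b⟩ : Nonempty (Module.Basis (Fin 2) ℝ ↥V) := ⟨Module.finBasisOfFinrankEq ℝ ↥V h2⟩
  set p : ℍ[ℝ] := ((b 0 : ↥V) : ℍ[ℝ]) with hp
  set q : ℍ[ℝ] := ((b 1 : ↥V) : ℍ[ℝ]) with hq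
  have hli : LinearIndependent ℝ (fun i => ((b i : ↥V) : ℍ[ℝ])) :=
    LinearIndependent.map' (Module.Basis.linearIndependent b) V.subtype (Submodule.ker_subtype V)
  have hcV : p * q - q * p ∈ V := hbr _ (b 0).2 _ (b 1).2
  have hrepr := b.sum_repr ⟨p * q - q * p, hcV⟩
  set a : ℝ := b.repr ⟨p * q - q * p, hcV⟩ 0 with ha
  set t : ℝ := b.repr ⟨p * q - q * p, hcV⟩ 1 with ht
  rw [Fin.sum_univ_two] at hrepr
  have heq : a • p + t • q = p * q - q * p := by
    have h := congrArg (Subtype.val) hrepr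
    simp only [Submodule.coe_add, SetLike.val_smul] at h
    exact h
  have hpre : p.re = 0 := hpure _ (b 0).2
  have hqre : q.re = 0 := hpure _ (b 1).2
  rw [Quaternion.ext_iff] at heq
  obtain ⟨e0, e1, e2, e3⟩ := heq
  simp [hpre, hqre] at e1 e2 e3
  -- cross product components vanish
  have hsum : (p.imJ * q.imK - p.imK * q.imJ)^2 + (p.imK * q.imI - p.imI * q.imK)^2
      + (p.imI * q.imJ - p.imJ * q.imI)^2 = 0 := by
    linear_combination (-(p.imJ * q.imK - p.imK * q.imJ)/2) * e1
      + (-(p.imK * q.imI - p.imI * q.imK)/2) * e2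
      + (-(p.imI * q.imJ - p.imJ * q.imI)/2) * e3
  obtain ⟨hX, hY, hZ⟩ := sq3_aux hsum
  -- p ≠ 0
  have hpne : p ≠ 0 := by
    exact hli.ne_zero 0
  have hdep : ∀ s u : ℝ, s • p + u • q = 0 → s = 0 ∧ u = 0 := by
    intro s u hsu
    have hg : (∑ i, (![s, u] : Fin 2 → ℝ) i • ((b i : ↥V) : ℍ[ℝ])) = 0 := by
      rw [Fin.sum_univ_two]
      show s • p + u • q = 0
      exact hsu
    have := Fintype.linearIndependent_iff.mp hli ![s, u] hg
    exact ⟨this 0, this 1⟩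
  -- build a dependence
  have hcase : p.imI ≠ 0 ∨ p.imJ ≠ 0 ∨ p.imK ≠ 0 := by
    by_contra hc
    push_neg at hc
    apply hpne
    rw [Quaternion.ext_iff]
    exact ⟨hpre, hc.1, hc.2.1, hc.2.2⟩
  rcases hcase with hI | hJ | hK
  · have h0 : q.imI • p + (-p.imI) • q = 0 := by
      rw [Quaternion.ext_iff]
      simp [hpre, hqre]
      refine ⟨by ring, by linear_combination -hZ, by linear_combination hY⟩
    exact hI (neg_eq_zero.mp (hdep _ _ h0).2)
  · have h0 : q.imJ • p + (-p.imJ) • q = 0 := by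
      rw [Quaternion.ext_iff]
      simp [hpre, hqre]
      refine ⟨by linear_combination hZ, by ring, by linear_combination -hX⟩
    exact hJ (neg_eq_zero.mp (hdep _ _ h0).2)
  · have h0 : q.imK • p + (-p.imK) • q = 0 := by
      rw [Quaternion.ext_iff]
      simp [hpre, hqre]
      refine ⟨by linear_combination -hY, by linear_combination hX, by ring⟩
    exact hK (neg_eq_zero.mp (hdep _ _ h0).2)
end

section
/- Let n ≥ 1, let 𝕛 and A be n×n matrices over the quaternions ℍ with Aᴴ𝕛 = −𝕛A, let a ∈ ℍ with star a = −a, let d ∈ ℝ, and let X ∈ ℍⁿ be a column vector. Form the (n+2)×(n+2) quaternionic block matrices with block sizes (1, n, 1): τ = [[a, 0, d], [0, A, 0], [1, 0, a]] and X̃ = [[0, (A·X − X·a)ᴴ·𝕛, 0], [X, 0, A·X − X·a], [0, −Xᴴ·𝕛, 0]]. Then τ and X̃ commute (τ·X̃ = X̃·τ) if and only if d•X + 2·(A·X)·a − X·a² − A·(A·X) = 0. -/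
open Quaternion Matrix

/-- The element `τ = [[a, 0, d], [0, A, 0], [1, 0, a]]` of `so*(2n+4)` in
`(1, n, 1)`-block form. -/
noncomputable def tauMat (n : ℕ) (a : ℍ[ℝ]) (A : Matrix (Fin n) (Fin n) ℍ[ℝ])
    (d : ℝ) : Matrix (Fin 1 ⊕ Fin n ⊕ Fin 1) (Fin 1 ⊕ Fin n ⊕ Fin 1) ℍ[ℝ] :=
  Matrix.of fun r c =>
    match r, c with
    | Sum.inl _, Sum.inl _ => a
    | Sum.inl _, Sum.inr (Sum.inr _) => (d : ℍ[ℝ])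
    | Sum.inr (Sum.inl k), Sum.inr (Sum.inl l) => A k l
    | Sum.inr (Sum.inr _), Sum.inl _ => 1
    | Sum.inr (Sum.inr _), Sum.inr (Sum.inr _) => a
    | _, _ => 0

/-- The element `X̃ = [[0, (AX − Xa)ᴴ𝕛, 0], [X, 0, AX − Xa], [0, −Xᴴ𝕛, 0]]` in
`(1, n, 1)`-block form. -/
noncomputable def xTilde (n : ℕ) (𝕛 A : Matrix (Fin n) (Fin n) ℍ[ℝ])
    (a : ℍ[ℝ]) (X : Fin n → ℍ[ℝ]) :
    Matrix (Fin 1 ⊕ Fin n ⊕ Fin 1) (Fin 1 ⊕ Fin n ⊕ Fin 1) ℍ[ℝ] :=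
  Matrix.of fun r c =>
    match r, c with
    | Sum.inl _, Sum.inr (Sum.inl l) =>
        ∑ k, star (A.mulVec X k - X k * a) * 𝕛 k l
    | Sum.inr (Sum.inl k), Sum.inl _ => X k
    | Sum.inr (Sum.inl k), Sum.inr (Sum.inr _) => A.mulVec X k - X k * a
    | Sum.inr (Sum.inr _), Sum.inr (Sum.inl l) => -∑ k, star (X k) * 𝕛 k l
    | _, _ => 0


lemma key_aux {n : ℕ} (𝕛 A : Matrix (Fin n) (Fin n) ℍ[ℝ]) (hA : Aᴴ * 𝕛 = -(𝕛 * A))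
    (V : Fin n → ℍ[ℝ]) (l : Fin n) :
    ∑ k, star (A.mulVec V k) * 𝕛 k l =
      -∑ k, (∑ j, star (V j) * 𝕛 j k) * A k l := by
  have hAe : ∀ j l, ∑ k, star (A k j) * 𝕛 k l = -∑ k, 𝕛 j k * A k l := by
    intro j l
    have := congrFun (congrFun hA j) l
    simpa [Matrix.mul_apply, Matrix.conjTranspose_apply, Matrix.neg_apply] using this
  calc ∑ k, star (A.mulVec V k) * 𝕛 k l
      = ∑ k, ∑ j, star (V j) * (star (A k j) * 𝕛 k l) := by
        simp [Matrix.mulVec, dotProduct, star_sum, StarMul.star_mul, Finset.sum_mul, mul_assoc]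
    _ = ∑ j, star (V j) * ∑ k, star (A k j) * 𝕛 k l := by
        rw [Finset.sum_comm]; simp [Finset.mul_sum]
    _ = ∑ j, star (V j) * -∑ k, 𝕛 j k * A k l := by
        simp only [hAe]
    _ = -∑ k, (∑ j, star (V j) * 𝕛 j k) * A k l := by
        simp [Finset.mul_sum, Finset.sum_mul, mul_assoc, ← Finset.sum_neg_distrib]
        rw [Finset.sum_comm]

set_option maxHeartbeats 1000000 in

set_option maxHeartbeats 1000000 in
/-- For `a ∈ sp(1)`, `A ∈ so*(2n)` (i.e. `Aᴴ𝕛 = −𝕛A`), `d ∈ ℝ`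
and a column `X ∈ ℍⁿ`, the matrices `τ` and `X̃` commute if and only if
`d•X + 2(AX)a − Xa² − A(AX) = 0`. -/
theorem tau_commutes_iff_symtest
    (n : ℕ) (hn : 1 ≤ n)
    (𝕛 A : Matrix (Fin n) (Fin n) ℍ[ℝ]) (hA : Aᴴ * 𝕛 = -(𝕛 * A))
    (a : ℍ[ℝ]) (ha : star a = -a) (d : ℝ) (X : Fin n → ℍ[ℝ]) :
    tauMat n a A d * xTilde n 𝕛 A a X = xTilde n 𝕛 A a X * tauMat n a A d ↔
      ∀ k, d • X k + 2 * (A.mulVec X k * a) - X k * a ^ 2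
            - A.mulVec (A.mulVec X) k = 0 := by
  have hs : ∀ q : ℍ[ℝ], d • q = q * (d:ℍ[ℝ]) := fun q => by
    rw [Algebra.smul_def]; exact (Algebra.commutes d q).symm ▸ rfl
  set P : Fin n → ℍ[ℝ] := fun l => ∑ k, star (X k) * 𝕛 k l with hP
  set Q : Fin n → ℍ[ℝ] := fun l => ∑ k, P k * A k l with hQ
  have hAX : ∀ l, ∑ k, star (A.mulVec X k) * 𝕛 k l = -Q l := fun l => key_aux 𝕛 A hA X l
  have hY : ∀ l, ∑ k, star (A.mulVec X k - X k * a) * 𝕛 k l = a * P l - Q l := by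
    intro l
    have : ∀ k, star (A.mulVec X k - X k * a) * 𝕛 k l
        = star (A.mulVec X k) * 𝕛 k l + a * (star (X k) * 𝕛 k l) := by
      intro k
      simp [sub_mul, StarMul.star_mul, ha, mul_assoc]
      noncomm_ring
    rw [Finset.sum_congr rfl fun k _ => this k, Finset.sum_add_distrib, hAX,
      ← Finset.mul_sum]
    noncomm_ring
  constructor
  · intro h k
    have h1 := congrFun (congrFun h (Sum.inr (Sum.inl k))) (Sum.inr (Sum.inr 0))
    simp [tauMat, xTilde, Matrix.mul_apply, Fintype.sum_sum_type, Fin.sum_univ_one] at h1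
    have h2 : A.mulVec (A.mulVec X) k - A.mulVec X k * a
        = X k * ↑d + ((A *ᵥ X) k - X k * a) * a := by
      rw [← h1]
      simp [mul_sub, Finset.sum_sub_distrib, Matrix.mulVec, dotProduct, Finset.sum_mul, mul_assoc]
    rw [hs, sub_eq_iff_eq_add.mp h2]
    noncomm_ring
  · intro h
    -- T identity
    have hA2X : ∀ l, ∑ k, star (A.mulVec (A.mulVec X) k) * 𝕛 k l = ∑ k, Q k * A k l := by
      intro l
      rw [key_aux 𝕛 A hA (A.mulVec X) l]
      simp only [hAX, neg_mul, Finset.sum_neg_distrib, neg_neg]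
    have hT : ∀ l, (d:ℍ[ℝ]) * P l + 2 * (a * Q l) - a * (a * P l) - ∑ k, Q k * A k l = 0 := by
      intro l
      have h0 : ∑ k, star (d • X k + 2 * (A.mulVec X k * a) - X k * a ^ 2
          - A.mulVec (A.mulVec X) k) * 𝕛 k l = 0 := by
        simp only [h, star_zero, zero_mul, Finset.sum_const_zero]
      have hexp : ∀ k, star (d • X k + 2 * (A.mulVec X k * a) - X k * a ^ 2
          - A.mulVec (A.mulVec X) k) * 𝕛 k l
          = (d:ℍ[ℝ]) * (star (X k) * 𝕛 k l) - 2 * (a * (star (A.mulVec X k) * 𝕛 k l))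
            - (a * (a * (star (X k) * 𝕛 k l))) - star (A.mulVec (A.mulVec X) k) * 𝕛 k l := by
        intro k
        have : star (d • X k + 2 * (A.mulVec X k * a) - X k * a ^ 2
            - A.mulVec (A.mulVec X) k)
            = (d:ℍ[ℝ]) * star (X k) - 2 * (a * star (A.mulVec X k))
              - a * (a * star (X k)) - star (A.mulVec (A.mulVec X) k) := by
          simp [StarMul.star_mul, ha, pow_two, hs, Quaternion.star_smul]
          noncomm_ring
        rw [this]
        noncomm_ring
      rw [Finset.sum_congr rfl fun k _ => hexp k] at h0
      simp only [Finset.sum_sub_distrib, ← Finset.mul_sum, hAX, hA2X] at h0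
      rw [← h0, hP]
      noncomm_ring
    apply Matrix.ext
    intro i j
    rcases i with i | k | i <;> rcases j with j | l | j <;>
      simp only [tauMat, xTilde, Matrix.mul_apply, Fintype.sum_sum_type, Fin.sum_univ_one,
        Matrix.of_apply, mul_zero, zero_mul, mul_one, one_mul, add_zero, zero_add,
        Finset.sum_const_zero, neg_zero, mul_neg, neg_mul]
    · -- (1,2) entry
      rw [hY l]
      have hsum : ∑ x, (∑ k, star ((A *ᵥ X) k - X k * a) * 𝕛 k x) * A x l
          = ∑ x, (a * P x - Q x) * A x l :=
        Finset.sum_congr rfl fun x _ => by rw [hY x]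
      rw [hsum]
      have hrhs : ∑ x, (a * P x - Q x) * A x l = a * Q l - ∑ x, Q x * A x l := by
        simp [sub_mul, Finset.sum_sub_distrib, mul_assoc, Finset.mul_sum, hQ]
      rw [hrhs, ← sub_eq_zero.mp (hT l)]
      simp only [hP]
      noncomm_ring
    · -- (2,1) entry
      simp [Matrix.mulVec, dotProduct]
    · -- (2,3) entry
      have h2 : ∑ x, A k x * ((A *ᵥ X) x - X x * a)
          = A.mulVec (A.mulVec X) k - A.mulVec X k * a := by
        simp [mul_sub, Finset.sum_sub_distrib, Matrix.mulVec, dotProduct, Finset.sum_mul,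
          mul_assoc]
      have h3 := h k
      rw [hs] at h3
      rw [h2, ← sub_eq_zero.mp h3]
      noncomm_ring
    · -- (3,2) entry
      rw [hY l]
      simp only [hP, hQ, Finset.sum_neg_distrib]
      abel
end

section
/- Let a be a pure imaginary quaternion and let b, d ∈ ℝ with b ≠ 0. Then x·d + 2·b·(j·x·a) − x·a² + b²·x = 0 holds for every quaternion x if and only if a = 0 and d = −b². -/
open Quaternion

/-- The imaginary quaternion unit `j`. -/
noncomputable def qJ : ℍ[ℝ] := ⟨0, 0, 1, 0⟩

/-- A quaternion literal typed as `ℍ[ℝ]`. -/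
def qmk (p q r t : ℝ) : ℍ[ℝ] := ⟨p, q, r, t⟩

@[simp] theorem qmk_re (p q r t : ℝ) : (qmk p q r t).re = p := rfl
@[simp] theorem qmk_imI (p q r t : ℝ) : (qmk p q r t).imI = q := rfl
@[simp] theorem qmk_imJ (p q r t : ℝ) : (qmk p q r t).imJ = r := rfl
@[simp] theorem qmk_imK (p q r t : ℝ) : (qmk p q r t).imK = t := rfl
theorem qJ_eq : qJ = qmk 0 0 1 0 := rfl

/-- For a pure imaginary quaternion `a` and reals `b ≠ 0`, `d`,
the identity `x·d + 2b·(j·x·a) − x·a² + b²·x = 0` holds for every quaternion `x`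
if and only if `a = 0` and `d = -b²`. -/
theorem jordan_block_J1_bj_analysis
    (a : ℍ[ℝ]) (ha : a.re = 0) (b d : ℝ) (hb : b ≠ 0) :
    (∀ x : ℍ[ℝ],
        x * (d : ℍ[ℝ]) + ((2 * b : ℝ) : ℍ[ℝ]) * (qJ * x * a)
          - x * a ^ 2 + ((b ^ 2 : ℝ) : ℍ[ℝ]) * x = 0)
      ↔ (a = 0 ∧ d = -b ^ 2) := by
  obtain ⟨a1, a2, a3, rfl⟩ : ∃ a1 a2 a3 : ℝ, a = qmk 0 a1 a2 a3 :=
    ⟨a.imI, a.imJ, a.imK, by ext <;> simp [ha]⟩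
  constructor
  · intro h
    have h1 := h 1
    have h2 := h (qmk 0 1 0 0)
    rw [Quaternion.ext_iff] at h1 h2
    simp only [qJ_eq, qmk_re, qmk_imI, qmk_imJ, qmk_imK, Quaternion.re_mul, Quaternion.imI_mul, Quaternion.imJ_mul,
      Quaternion.imK_mul, Quaternion.re_add, Quaternion.imI_add, Quaternion.imJ_add,
      Quaternion.imK_add, Quaternion.re_sub, Quaternion.imI_sub, Quaternion.imJ_sub,
      Quaternion.imK_sub, Quaternion.re_one, Quaternion.imI_one, Quaternion.imJ_one,
      Quaternion.imK_one, Quaternion.re_coe, Quaternion.imI_coe, Quaternion.imJ_coe,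
      Quaternion.imK_coe, Quaternion.re_zero, Quaternion.imI_zero, Quaternion.imJ_zero,
      Quaternion.imK_zero, pow_two] at h1 h2
    obtain ⟨e1, e2, e3, e4⟩ := h1
    obtain ⟨f1, f2, f3, f4⟩ := h2
    ring_nf at e1 e2 e3 e4 f1 f2 f3 f4
    have ha1 : a1 = 0 := by
      have hba : b * a1 = 0 := by linarith
      exact (mul_eq_zero.mp hba).resolve_left hb
    have ha3 : a3 = 0 := by
      have hba : b * a3 = 0 := by linarith
      exact (mul_eq_zero.mp hba).resolve_left hb
    have ha2 : a2 = 0 := by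
      have hba : b * a2 = 0 := by linarith
      exact (mul_eq_zero.mp hba).resolve_left hb
    subst ha1; subst ha2; subst ha3
    refine ⟨rfl, ?_⟩
    nlinarith [e1]
  · rintro ⟨h1, h2⟩ x
    rw [Quaternion.ext_iff] at h1
    simp only [Quaternion.re_zero, Quaternion.imI_zero, Quaternion.imJ_zero,
      Quaternion.imK_zero, qmk_re, qmk_imI, qmk_imJ, qmk_imK] at h1
    obtain ⟨_, g1, g2, g3⟩ := h1
    subst g1; subst g2; subst g3; subst h2
    ext <;>
      simp only [qJ_eq, qmk_re, qmk_imI, qmk_imJ, qmk_imK, Quaternion.re_mul, Quaternion.imI_mul, Quaternion.imJ_mul,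
        Quaternion.imK_mul, Quaternion.re_add, Quaternion.imI_add, Quaternion.imJ_add,
        Quaternion.imK_add, Quaternion.re_sub, Quaternion.imI_sub, Quaternion.imJ_sub,
        Quaternion.imK_sub, Quaternion.re_coe, Quaternion.imI_coe, Quaternion.imJ_coe,
        Quaternion.imK_coe, Quaternion.re_zero, Quaternion.imI_zero, Quaternion.imJ_zero,
        Quaternion.imK_zero, pow_two] <;> ring
end

section
/- Let a be a pure imaginary quaternion, let d ∈ ℝ, and let β = s + t·i be a complex quaternion (s, t ∈ ℝ) with s > 0. Then x·d + 2·β·x·a − x·a² − β²·x = 0 holds for every quaternion x if and only if a = 0, t = 0, and d = s². -/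
open Quaternion

/-- The complex quaternion `β = s + t·i`. -/
noncomputable def betaQ (s t : ℝ) : ℍ[ℝ] := ⟨s, t, 0, 0⟩

set_option maxHeartbeats 1000000 in
/-- Let `a` be a pure imaginary quaternion, `d ∈ ℝ`, and
`β = s + t·i` a complex quaternion with `s > 0`.  Then
`x·d + 2·β·x·a − x·a² − β²·x = 0` holds for every quaternion `x` iff
`a = 0`, `t = 0` and `d = s²`. -/
theorem jordan_block_J1_beta_analysis
    (a : ℍ[ℝ]) (ha : a.re = 0) (d s t : ℝ) (hs : 0 < s) :
    (∀ x : ℍ[ℝ],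
        x * (d : ℍ[ℝ]) + 2 * betaQ s t * x * a
          - x * a ^ 2 - (betaQ s t) ^ 2 * x = 0)
      ↔ (a = 0 ∧ t = 0 ∧ d = s ^ 2) := by
  have htwo : (2 : ℍ[ℝ]) = ⟨2,0,0,0⟩ := rfl
  constructor
  · intro h
    have h1 := h 1
    have hj := h ⟨0, 0, 1, 0⟩
    rw [Quaternion.ext_iff] at h1 hj
    obtain ⟨J, hJ⟩ : ∃ J : ℍ[ℝ], J = ⟨0, 0, 1, 0⟩ := ⟨_, rfl⟩
    rw [← hJ] at hj
    have hJ' : J.re = 0 ∧ J.imI = 0 ∧ J.imJ = 1 ∧ J.imK = 0 := by subst hJ; exact ⟨rfl, rfl, rfl, rfl⟩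
    have hB : (betaQ s t).re = s ∧ (betaQ s t).imI = t ∧ (betaQ s t).imJ = 0 ∧ (betaQ s t).imK = 0 :=
      ⟨rfl, rfl, rfl, rfl⟩
    have h2 : (2 : ℍ[ℝ]).re = 2 ∧ (2 : ℍ[ℝ]).imI = 0 ∧ (2 : ℍ[ℝ]).imJ = 0 ∧ (2 : ℍ[ℝ]).imK = 0 := by
      rw [htwo]; exact ⟨rfl, rfl, rfl, rfl⟩
    simp [hJ', hB, h2, pow_two, Quaternion.re_mul, Quaternion.imI_mul, Quaternion.imJ_mul,
      Quaternion.imK_mul, ha] at h1 hj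
    obtain ⟨e1, e2, e3, e4⟩ := h1
    obtain ⟨f1, f2, f3, f4⟩ := hj
    have hst : s * t = 0 := by nlinarith [e2, f4]
    have ht : t = 0 := by
      rcases mul_eq_zero.mp hst with h' | h'
      · exact absurd h' (ne_of_gt hs)
      · exact h'
    subst ht
    have ha1 : a.imI = 0 := by
      have : 2 * s * a.imI = 0 := by linarith
      have := mul_eq_zero.mp this
      rcases this with h' | h'
      · nlinarith
      · exact h'
    have ha2 : a.imJ = 0 := by
      have : 2 * s * a.imJ = 0 := by linarith
      rcases mul_eq_zero.mp this with h' | h'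
      · nlinarith
      · exact h'
    have ha3 : a.imK = 0 := by
      have : 2 * s * a.imK = 0 := by linarith
      rcases mul_eq_zero.mp this with h' | h'
      · nlinarith
      · exact h'
    refine ⟨?_, rfl, ?_⟩
    · ext <;> simp [ha, ha1, ha2, ha3]
    · nlinarith [e1]
  · rintro ⟨rfl, rfl, rfl⟩
    intro x
    rw [Quaternion.ext_iff]
    have hB : (betaQ s 0).re = s ∧ (betaQ s 0).imI = 0 ∧ (betaQ s 0).imJ = 0 ∧ (betaQ s 0).imK = 0 :=
      ⟨rfl, rfl, rfl, rfl⟩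
    have h2 : (2 : ℍ[ℝ]).re = 2 ∧ (2 : ℍ[ℝ]).imI = 0 ∧ (2 : ℍ[ℝ]).imJ = 0 ∧ (2 : ℍ[ℝ]).imK = 0 := by
      rw [htwo]; exact ⟨rfl, rfl, rfl, rfl⟩
    simp [hB, h2, pow_two, Quaternion.re_mul, Quaternion.imI_mul, Quaternion.imJ_mul,
      Quaternion.imK_mul]
    refine ⟨by ring, by ring, by ring, by ring⟩
end
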